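/- arXiv:2410.23001 — 9 statements merged into one kernel-verified Lean document; each statement's English description precedes it below -/
import Mathlib

section
/- (Partial failure of strict propriety, part 1.) Let Ω be a finite set with at least two elements and 𝒜 a finite action set with at least two elements. For every loss function ℓ : 𝒜 × Ω → ℝ there exist a nonempty compact convex set 𝒫 ⊆ Δ containing more than one probability measure, a probability measure P* ∈ 𝒫, and an action a* ∈ 𝒜 with a* ∈ argmin_{a∈𝒜} E_{P*}[ℓ(a,·)], such that max_{P∈𝒫} E_P[ℓ(a*,·)] = min_{a∈𝒜} max_{P∈𝒫} E_P[ℓ(a,·)]; that is, the precise forecast P* achieves the same IP score as the (genuinely imprecise) forecast 𝒫 under a 𝒫 data model. -/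
/-- `P` is a probability measure on the finite set `Ω`. -/
def IsProb {Ω : Type*} [Fintype Ω] (P : Ω → ℝ) : Prop :=
  (∀ ω, 0 ≤ P ω) ∧ ∑ ω, P ω = 1

/-- Expectation of the gamble `Z` under `P`. -/
noncomputable def expct {Ω : Type*} [Fintype Ω] (P Z : Ω → ℝ) : ℝ :=
  ∑ ω, P ω * Z ω

/-- Upper expectation of the gamble `Z` over the set of probability measures `Ps`. -/
noncomputable def upExp {Ω : Type*} [Fintype Ω] (Ps : Set (Ω → ℝ)) (Z : Ω → ℝ) : ℝ :=
  sSup ((fun P => expct P Z) '' Ps)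

/-- Partial failure of strict propriety, part 1: for every loss function `ℓ` there is a
nonempty compact convex set `Ps` of probability measures with more than one element,
a measure `Pstar ∈ Ps` and a Bayes action `astar` of `Pstar`, such that the precise
forecast `Pstar` achieves the same IP score as the genuinely imprecise forecast `Ps`
under the `Ps` data model. -/
theorem partial_failure_strict_propriety_part1
    {Ω 𝒜 : Type*} [Fintype Ω] [Fintype 𝒜]
    (hΩ : 2 ≤ Fintype.card Ω) (h𝒜 : 2 ≤ Fintype.card 𝒜)
    (ℓ : 𝒜 → Ω → ℝ) :
    ∃ (Ps : Set (Ω → ℝ)) (Pstar : Ω → ℝ) (astar : 𝒜),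
      Ps.Nonempty ∧ IsCompact Ps ∧ Convex ℝ Ps ∧ (∀ P ∈ Ps, IsProb P) ∧
      (∃ P₁ ∈ Ps, ∃ P₂ ∈ Ps, P₁ ≠ P₂) ∧
      Pstar ∈ Ps ∧
      (∀ a : 𝒜, expct Pstar (ℓ astar) ≤ expct Pstar (ℓ a)) ∧
      upExp Ps (ℓ astar) = ⨅ a : 𝒜, upExp Ps (ℓ a) := by
  classical
  have hΩ0 : Nonempty Ω := Fintype.card_pos_iff.mp (by omega)
  have h𝒜0 : Nonempty 𝒜 := Fintype.card_pos_iff.mp (by omega)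
  have hn : (0:ℝ) < (Fintype.card Ω : ℝ) := by
    exact_mod_cast Fintype.card_pos
  set U : Ω → ℝ := fun _ => ((Fintype.card Ω : ℝ))⁻¹ with hUdef
  have hUprob : IsProb U := by
    constructor
    · intro ω; positivity
    · simp [hUdef, Finset.sum_const, Finset.card_univ]
  obtain ⟨astar, -, hast⟩ := Finset.exists_min_image Finset.univ
    (fun a => expct U (ℓ a)) ⟨h𝒜0.some, Finset.mem_univ _⟩
  set c : ℝ := expct U (ℓ astar) with hc
  set Ps : Set (Ω → ℝ) := {P | IsProb P ∧ expct P (ℓ astar) ≤ c} with hPs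
  have hUmem : U ∈ Ps := ⟨hUprob, le_refl c⟩
  -- point mass at argmin of ℓ astar
  obtain ⟨ω0, -, hω0⟩ := Finset.exists_min_image Finset.univ (ℓ astar)
    ⟨hΩ0.some, Finset.mem_univ _⟩
  set D : Ω → ℝ := fun ω => if ω = ω0 then 1 else 0 with hDdef
  have hDprob : IsProb D := by
    constructor
    · intro ω; simp only [hDdef]; split <;> norm_num
    · simp [hDdef]
  have hDexp : expct D (ℓ astar) = ℓ astar ω0 := by
    simp [expct, hDdef, Finset.sum_ite_eq', ite_mul]
  have hDmem : D ∈ Ps := by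
    refine ⟨hDprob, ?_⟩
    rw [hDexp, hc]
    have : ∀ ω ∈ Finset.univ, ((Fintype.card Ω : ℝ))⁻¹ * ℓ astar ω0
        ≤ U ω * ℓ astar ω := by
      intro ω _
      exact mul_le_mul_of_nonneg_left (hω0 ω (Finset.mem_univ ω)) (by positivity)
    calc ℓ astar ω0 = ∑ _ω : Ω, ((Fintype.card Ω : ℝ))⁻¹ * ℓ astar ω0 := by
          rw [Finset.sum_const, Finset.card_univ]
          rw [nsmul_eq_mul]
          field_simp
      _ ≤ ∑ ω, U ω * ℓ astar ω := Finset.sum_le_sum this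
  have hDneU : D ≠ U := by
    intro h
    have h1 : (1:ℝ) = ((Fintype.card Ω : ℝ))⁻¹ := by
      simpa [hDdef, hUdef] using congrFun h ω0
    rw [eq_comm, inv_eq_one] at h1
    have : Fintype.card Ω = 1 := by exact_mod_cast h1
    omega
  -- bound: expectations of ℓ a over prob measures are ≤ sup of ℓ a
  have hbound : ∀ a : 𝒜, ∀ P ∈ Ps, expct P (ℓ a)
      ≤ Finset.univ.sup' ⟨hΩ0.some, Finset.mem_univ _⟩ (ℓ a) := by
    intro a P hP
    obtain ⟨⟨hP0, hP1⟩, -⟩ := hP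
    calc expct P (ℓ a) = ∑ ω, P ω * ℓ a ω := rfl
      _ ≤ ∑ ω, P ω * Finset.univ.sup' ⟨hΩ0.some, Finset.mem_univ _⟩ (ℓ a) := by
          apply Finset.sum_le_sum
          intro ω _
          exact mul_le_mul_of_nonneg_left
            (Finset.le_sup' (ℓ a) (Finset.mem_univ ω)) (hP0 ω)
      _ = 1 * Finset.univ.sup' ⟨hΩ0.some, Finset.mem_univ _⟩ (ℓ a) := by
          rw [← Finset.sum_mul, hP1]
      _ = _ := one_mul _
  have hbdd : ∀ a : 𝒜, BddAbove ((fun P => expct P (ℓ a)) '' Ps) := by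
    intro a
    refine ⟨Finset.univ.sup' ⟨hΩ0.some, Finset.mem_univ _⟩ (ℓ a), ?_⟩
    rintro x ⟨P, hP, rfl⟩
    exact hbound a P hP
  -- upExp of astar is c
  have hup_astar : upExp Ps (ℓ astar) = c := by
    apply le_antisymm
    · refine csSup_le ⟨_, Set.mem_image_of_mem _ hUmem⟩ ?_
      rintro x ⟨P, hP, rfl⟩
      exact hP.2
    · exact le_csSup (hbdd astar) ⟨U, hUmem, rfl⟩
  -- for every a, c ≤ upExp Ps (ℓ a)
  have hup_ge : ∀ a : 𝒜, c ≤ upExp Ps (ℓ a) := by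
    intro a
    calc c ≤ expct U (ℓ a) := hast a (Finset.mem_univ a)
      _ ≤ upExp Ps (ℓ a) := le_csSup (hbdd a) ⟨U, hUmem, rfl⟩
  refine ⟨Ps, U, astar, ⟨U, hUmem⟩, ?_, ?_, fun P hP => hP.1,
    ⟨D, hDmem, U, hUmem, hDneU⟩, hUmem, fun a => hast a (Finset.mem_univ a), ?_⟩
  · -- compact
    apply IsCompact.of_isClosed_subset
      (isCompact_univ_pi (fun _ : Ω => isCompact_Icc (a := (0:ℝ)) (b := 1)))
    · have h1 : IsClosed {P : Ω → ℝ | ∀ ω, 0 ≤ P ω} := by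
        have : {P : Ω → ℝ | ∀ ω, 0 ≤ P ω} = ⋂ ω, {P : Ω → ℝ | 0 ≤ P ω} := by
          ext P; simp [Set.mem_iInter]
        rw [this]
        exact isClosed_iInter fun ω =>
          isClosed_le continuous_const (continuous_apply ω)
      have h2 : IsClosed {P : Ω → ℝ | ∑ ω, P ω = 1} :=
        isClosed_eq (by continuity) continuous_const
      have h3 : IsClosed {P : Ω → ℝ | expct P (ℓ astar) ≤ c} := by
        apply isClosed_le _ continuous_const
        unfold expct
        continuity
      have : Ps = ({P : Ω → ℝ | ∀ ω, 0 ≤ P ω} ∩ {P : Ω → ℝ | ∑ ω, P ω = 1})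
          ∩ {P : Ω → ℝ | expct P (ℓ astar) ≤ c} := by
        ext P; simp [hPs, IsProb, and_assoc]
      rw [this]
      exact ((h1.inter h2).inter h3)
    · rintro P ⟨⟨hP0, hP1⟩, -⟩
      intro ω _
      refine ⟨hP0 ω, ?_⟩
      calc P ω ≤ ∑ ω', P ω' :=
          Finset.single_le_sum (fun ω' _ => hP0 ω') (Finset.mem_univ ω)
        _ = 1 := hP1
  · -- convex
    rintro P ⟨⟨hP0, hP1⟩, hPe⟩ Q ⟨⟨hQ0, hQ1⟩, hQe⟩ s t hs ht hst
    refine ⟨⟨fun ω => add_nonneg (mul_nonneg hs (hP0 ω)) (mul_nonneg ht (hQ0 ω)), ?_⟩, ?_⟩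
    · simp only [Pi.add_apply, Pi.smul_apply, smul_eq_mul]
      rw [Finset.sum_add_distrib, ← Finset.mul_sum, ← Finset.mul_sum, hP1, hQ1]
      linarith
    · have : expct (s • P + t • Q) (ℓ astar)
          = s * expct P (ℓ astar) + t * expct Q (ℓ astar) := by
        simp only [expct, Pi.add_apply, Pi.smul_apply, smul_eq_mul,
          Finset.mul_sum, ← Finset.sum_add_distrib]
        congr 1; ext ω; ring
      rw [this]
      calc s * expct P (ℓ astar) + t * expct Q (ℓ astar)
          ≤ s * c + t * c := by
            apply add_le_add <;> apply mul_le_mul_of_nonneg_left <;> assumption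
        _ = c := by rw [← add_mul, hst, one_mul]
  · -- upExp equality
    rw [hup_astar]
    apply le_antisymm
    · exact le_ciInf hup_ge
    · calc ⨅ a, upExp Ps (ℓ a) ≤ upExp Ps (ℓ astar) :=
          ciInf_le (Finite.bddBelow_range _) astar
        _ = c := hup_astar
end

section
/- (Partial failure of strict propriety, part 2.) Let 𝒜 be a finite action set with |𝒜| ≥ 3. Then there exist a two-element set Ω, a loss function ℓ : 𝒜 × Ω → ℝ, and probability measures P₁, P₂ on Ω such that: (i) there is a unique action a₃ ∈ 𝒜 attaining min_{a∈𝒜} max_{i∈{1,2}} E_{P_i}[ℓ(a,·)]; (ii) for every probability measure P on Ω, the set argmin_{a∈𝒜} E_P[ℓ(a,·)] is not equal to the singleton {a₃}; consequently, for every probability measure P on Ω whose Bayes action is unique, that unique action a satisfies max_{i∈{1,2}} E_{P_i}[ℓ(a,·)] > min_{a'∈𝒜} max_{i∈{1,2}} E_{P_i}[ℓ(a',·)], so no precise forecast with a unique action recommendation achieves the optimal IP score under the {P₁,P₂} data model. -/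
lemma expct_two (P Z : Fin 2 → ℝ) : expct P Z = P 0 * Z 0 + P 1 * Z 1 := by
  simp [expct, Fin.sum_univ_two]

/-- Partial failure of strict propriety, part 2: with at least three actions, there are a
two-element set `Ω = Fin 2`, a loss `ℓ` and probability measures `P₁, P₂` such that the
MinMax-optimal action `a₃` over `{P₁, P₂}` is unique, yet no precise probability measure
has `{a₃}` as its Bayes action set; consequently every precise forecast with a unique
Bayes action scores strictly worse than the optimal IP score under `{P₁, P₂}`. -/
theorem partial_failure_strict_propriety_part2
    {𝒜 : Type*} [Fintype 𝒜] (h𝒜 : 3 ≤ Fintype.card 𝒜) :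
    ∃ (ℓ : 𝒜 → Fin 2 → ℝ) (P₁ P₂ : Fin 2 → ℝ) (a₃ : 𝒜),
      IsProb P₁ ∧ IsProb P₂ ∧
      -- (i): a₃ attains the minimax value and is the unique such action
      (∀ a : 𝒜, max (expct P₁ (ℓ a₃)) (expct P₂ (ℓ a₃))
          ≤ max (expct P₁ (ℓ a)) (expct P₂ (ℓ a))) ∧
      (∀ a : 𝒜, (∀ a' : 𝒜, max (expct P₁ (ℓ a)) (expct P₂ (ℓ a))
          ≤ max (expct P₁ (ℓ a')) (expct P₂ (ℓ a'))) → a = a₃) ∧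
      -- (ii): no precise forecast has Bayes action set exactly {a₃}
      (∀ P : Fin 2 → ℝ, IsProb P →
        {a : 𝒜 | ∀ a' : 𝒜, expct P (ℓ a) ≤ expct P (ℓ a')} ≠ {a₃}) ∧
      -- consequently: every precise forecast with a unique Bayes action is strictly suboptimal
      (∀ P : Fin 2 → ℝ, IsProb P → ∀ a : 𝒜,
        {a' : 𝒜 | ∀ a'' : 𝒜, expct P (ℓ a') ≤ expct P (ℓ a'')} = {a} →
        (⨅ a' : 𝒜, max (expct P₁ (ℓ a')) (expct P₂ (ℓ a')))
          < max (expct P₁ (ℓ a)) (expct P₂ (ℓ a))) := by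
  classical
  obtain ⟨f⟩ : Nonempty (Fin 3 ↪ 𝒜) :=
    Function.Embedding.nonempty_of_card_le (by simpa using h𝒜)
  set a₁ : 𝒜 := f 0 with ha₁
  set a₂ : 𝒜 := f 1 with ha₂
  set a₃ : 𝒜 := f 2 with ha₃
  have h12 : a₁ ≠ a₂ := fun h => by simpa using f.injective h
  have h13 : a₁ ≠ a₃ := fun h => by simpa using f.injective h
  have h23 : a₂ ≠ a₃ := fun h => by simpa using f.injective h
  set ℓ : 𝒜 → Fin 2 → ℝ := fun a =>
    if a = a₁ then ![0, 4] else if a = a₂ then ![4, 0] else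
      if a = a₃ then ![3, 3] else ![4, 4] with hℓ
  have hℓ1 : ℓ a₁ = ![0, 4] := by simp [hℓ]
  have hℓ2 : ℓ a₂ = ![4, 0] := by simp [hℓ, h12.symm]
  have hℓ3 : ℓ a₃ = ![3, 3] := by simp [hℓ, h13.symm, h23.symm]
  set P₁ : Fin 2 → ℝ := ![1, 0] with hP₁
  set P₂ : Fin 2 → ℝ := ![0, 1] with hP₂
  have hE1 : ∀ Z : Fin 2 → ℝ, expct P₁ Z = Z 0 := fun Z => by
    simp [expct_two, hP₁]
  have hE2 : ∀ Z : Fin 2 → ℝ, expct P₂ Z = Z 1 := fun Z => by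
    simp [expct_two, hP₂]
  -- minimax score of each action
  have hscore : ∀ a : 𝒜, max (expct P₁ (ℓ a)) (expct P₂ (ℓ a))
      = if a = a₃ then 3 else 4 := by
    intro a
    rw [hE1, hE2]
    by_cases h1 : a = a₁
    · subst h1; rw [hℓ1]; norm_num [h13]
    by_cases h2 : a = a₂
    · subst h2; rw [hℓ2]; norm_num [h23]
    by_cases h3 : a = a₃
    · subst h3; rw [hℓ3]; norm_num
    · simp [hℓ, h1, h2, h3]
  have hscore3 : max (expct P₁ (ℓ a₃)) (expct P₂ (ℓ a₃)) = 3 := by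
    rw [hscore]; simp
  have hii : ∀ P : Fin 2 → ℝ, IsProb P →
      {a : 𝒜 | ∀ a' : 𝒜, expct P (ℓ a) ≤ expct P (ℓ a')} ≠ {a₃} := by
    intro P hP hset
    have ha₃mem : a₃ ∈ ({a₃} : Set 𝒜) := rfl
    rw [← hset] at ha₃mem
    have h1 := ha₃mem a₁
    have h2 := ha₃mem a₂
    rw [expct_two, expct_two, hℓ3, hℓ1] at h1
    rw [expct_two, expct_two, hℓ3, hℓ2] at h2
    simp only [Matrix.cons_val_zero, Matrix.cons_val_one, Matrix.head_cons] at h1 h2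
    have hsum : P 0 + P 1 = 1 := by have := hP.2; rwa [Fin.sum_univ_two] at this
    linarith
  refine ⟨ℓ, P₁, P₂, a₃, ⟨?_, ?_⟩, ⟨?_, ?_⟩, ?_, ?_, hii, ?_⟩
  · intro ω; fin_cases ω <;> norm_num [hP₁]
  · simp [Fin.sum_univ_two, hP₁]
  · intro ω; fin_cases ω <;> norm_num [hP₂]
  · simp [Fin.sum_univ_two, hP₂]
  · intro a
    rw [hscore3, hscore]
    split <;> norm_num
  · intro a ha
    by_contra hne
    have := ha a₃
    rw [hscore3, hscore a] at this
    simp [hne] at this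
    linarith
  · -- consequence
    intro P hP a hset
    have hane : a ≠ a₃ := by
      intro h; subst h; exact hii P hP hset
    have hinf : (⨅ a' : 𝒜, max (expct P₁ (ℓ a')) (expct P₂ (ℓ a'))) ≤ 3 := by
      have := ciInf_le (Finite.bddBelow_range (fun a' : 𝒜 => max (expct P₁ (ℓ a')) (expct P₂ (ℓ a')))) a₃
      rwa [hscore3] at this
    have : max (expct P₁ (ℓ a)) (expct P₂ (ℓ a)) = 4 := by
      rw [hscore]; simp [hane]
    rw [this]
    linarith
end

section
/- ('Strong' propriety.) Let Ω be a finite set with at least two elements, 𝒜 a finite action set with at least two elements, and let 𝒫, 𝒬 be nonempty sets of probability measures on Ω whose closed convex hulls in ℝ^Ω are distinct. Then there exists a loss function ℓ : 𝒜 × Ω → ℝ such that the sets argmin_{a∈𝒜} sup_{P∈𝒫} E_P[ℓ(a,·)] = {a_𝒫} and argmin_{a∈𝒜} sup_{Q∈𝒬} E_Q[ℓ(a,·)] = {a_𝒬} are singletons, a_𝒫 ≠ a_𝒬, and sup_{P∈𝒫} E_P[ℓ(a_𝒫,·)] < sup_{P∈𝒫} E_P[ℓ(a_𝒬,·)]; that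 is, under a 𝒫 data model the IP score of the forecast 𝒫 is strictly smaller than that of the forecast 𝒬 for this loss. -/
/-!
Two sets of probabilities with different closed convex hulls are told apart by their upper
expectations: a point of one hull outside the other is strictly separated from it by a linear
functional, i.e. by the expectation of some gamble `Z`, so `upExp Ps Z ≠ upExp Qs Z`. Comparing
`Z` with the constant gamble at the midpoint of the two upper expectations gives gambles `X`, `Y`
ranked oppositely by `Ps` and by `Qs`. The loss that plays `X` and `Y` on two actions and a
large constant on all the others then has the required unique MinMax actions.
-/

open Set

section UpperExpectation

variable {Ω : Type*} [Fintype Ω] {Ps Qs : Set (Ω → ℝ)}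

lemma continuous_expct (Z : Ω → ℝ) : Continuous fun P : Ω → ℝ => expct P Z := by
  unfold expct
  fun_prop

lemma bddAbove_image_expct (hPs : ∀ P ∈ Ps, IsProb P) (Z : Ω → ℝ) :
    BddAbove ((fun P => expct P Z) '' Ps) :=
  ((isCompact_stdSimplex ℝ Ω).bddAbove_image (continuous_expct Z).continuousOn).mono
    (image_mono hPs)

lemma expct_le_upExp (hPs : ∀ P ∈ Ps, IsProb P) {P : Ω → ℝ} (hP : P ∈ Ps) (Z : Ω → ℝ) :
    expct P Z ≤ upExp Ps Z :=
  le_csSup (bddAbove_image_expct hPs Z) (mem_image_of_mem _ hP)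

lemma upExp_le (hne : Ps.Nonempty) {Z : Ω → ℝ} {u : ℝ} (h : ∀ P ∈ Ps, expct P Z ≤ u) :
    upExp Ps Z ≤ u :=
  csSup_le (hne.image _) (forall_mem_image.2 h)

lemma expct_const {P : Ω → ℝ} (hP : IsProb P) (c : ℝ) : expct P (fun _ => c) = c := by
  rw [expct, ← Finset.sum_mul, hP.2, one_mul]

lemma upExp_const (hne : Ps.Nonempty) (hPs : ∀ P ∈ Ps, IsProb P) (c : ℝ) :
    upExp Ps (fun _ => c) = c := by
  obtain ⟨P, hP⟩ := hne
  refine le_antisymm (upExp_le ⟨P, hP⟩ fun Q hQ => (expct_const (hPs Q hQ) c).le) ?_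
  calc c = expct P (fun _ => c) := (expct_const (hPs P hP) c).symm
    _ ≤ upExp Ps (fun _ => c) := expct_le_upExp hPs hP _

lemma exists_expct_eq_linearMap (f : (Ω → ℝ) →ₗ[ℝ] ℝ) : ∃ Z : Ω → ℝ, ∀ P, expct P Z = f P := by
  classical
  exact ⟨fun ω => f fun j => if ω = j then 1 else 0,
    fun P => (f.pi_apply_eq_sum_univ P).symm⟩

lemma upExp_lt_upExp_of_mem_closure_convexHull (hQsne : Qs.Nonempty)
    (hPs : ∀ P ∈ Ps, IsProb P) {x : Ω → ℝ} (hx : x ∈ closure (convexHull ℝ Ps))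
    (hx' : x ∉ closure (convexHull ℝ Qs)) :
    ∃ Z : Ω → ℝ, upExp Qs Z < upExp Ps Z := by
  obtain ⟨f, u, hfQ, hfx⟩ :=
    geometric_hahn_banach_closed_point (convex_convexHull ℝ Qs).closure isClosed_closure hx'
  obtain ⟨Z, hZ⟩ := exists_expct_eq_linearMap f.toLinearMap
  have hQ : upExp Qs Z ≤ u := upExp_le hQsne fun Q hQ =>
    (hZ Q).trans_le (hfQ Q (subset_closure (subset_convexHull ℝ Qs hQ))).le
  have hsub : closure (convexHull ℝ Ps) ⊆ {y | f y ≤ upExp Ps Z} :=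
    closure_minimal
      (convexHull_min (fun P hP => (hZ P).symm.trans_le (expct_le_upExp hPs hP Z))
        (convex_halfSpace_le f.toLinearMap.isLinear _))
      (isClosed_le f.continuous continuous_const)
  exact ⟨Z, hQ.trans_lt (hfx.trans_le (hsub hx))⟩

lemma exists_upExp_ne (hPsne : Ps.Nonempty) (hQsne : Qs.Nonempty)
    (hPs : ∀ P ∈ Ps, IsProb P) (hQs : ∀ Q ∈ Qs, IsProb Q)
    (hdist : closure (convexHull ℝ Ps) ≠ closure (convexHull ℝ Qs)) :
    ∃ Z : Ω → ℝ, upExp Ps Z ≠ upExp Qs Z := by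
  by_contra! hZ
  refine hdist (Subset.antisymm (fun x hx => ?_) (fun x hx => ?_)) <;> by_contra hx'
  · obtain ⟨Z, hlt⟩ := upExp_lt_upExp_of_mem_closure_convexHull hQsne hPs hx hx'
    exact hlt.ne' (hZ Z)
  · obtain ⟨Z, hlt⟩ := upExp_lt_upExp_of_mem_closure_convexHull hPsne hQs hx hx'
    exact hlt.ne (hZ Z)

lemma exists_upExp_crossing (hPsne : Ps.Nonempty) (hQsne : Qs.Nonempty)
    (hPs : ∀ P ∈ Ps, IsProb P) (hQs : ∀ Q ∈ Qs, IsProb Q)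
    (hdist : closure (convexHull ℝ Ps) ≠ closure (convexHull ℝ Qs)) :
    ∃ X Y : Ω → ℝ, upExp Ps X < upExp Ps Y ∧ upExp Qs Y < upExp Qs X := by
  obtain ⟨Z, hZ⟩ := exists_upExp_ne hPsne hQsne hPs hQs hdist
  set c := (upExp Ps Z + upExp Qs Z) / 2 with hc
  have hPc := upExp_const hPsne hPs c
  have hQc := upExp_const hQsne hQs c
  rcases hZ.lt_or_gt with hlt | hgt
  · exact ⟨Z, fun _ => c, by rw [hPc]; linarith, by rw [hQc]; linarith⟩
  · exact ⟨fun _ => c, Z, by rw [hPc]; linarith, by rw [hQc]; linarith⟩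

end UpperExpectation

lemma setOf_forall_le_eq_singleton {α : Type*} {g : α → ℝ} {a₀ : α}
    (h : ∀ a, a ≠ a₀ → g a₀ < g a) : {a | ∀ a', g a ≤ g a'} = {a₀} := by
  refine eq_singleton_iff_unique_mem.2 ⟨fun a => ?_, fun a ha => ?_⟩
  · rcases eq_or_ne a a₀ with rfl | hne
    · exact le_rfl
    · exact (h a hne).le
  · by_contra hne
    exact (ha a₀).not_gt (h a hne)

section TwoActionLoss

variable {Ω 𝒜 : Type*} [DecidableEq 𝒜]

def twoActionLoss (a b : 𝒜) (X Y : Ω → ℝ) (M : ℝ) : 𝒜 → Ω → ℝ :=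
  fun a' => if a' = a then X else if a' = b then Y else fun _ => M

lemma twoActionLoss_comm {a b : 𝒜} (hab : a ≠ b) (X Y : Ω → ℝ) (M : ℝ) :
    twoActionLoss a b X Y M = twoActionLoss b a Y X M := by
  funext a'
  by_cases ha : a' = a <;> by_cases hb : a' = b <;> simp_all [twoActionLoss]

lemma twoActionLoss_left (a b : 𝒜) (X Y : Ω → ℝ) (M : ℝ) : twoActionLoss a b X Y M a = X :=
  if_pos rfl

lemma argmin_upExp_twoActionLoss [Fintype Ω] {Ps : Set (Ω → ℝ)} (hne : Ps.Nonempty)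
    (hPs : ∀ P ∈ Ps, IsProb P) {a b : 𝒜} (hab : a ≠ b) {X Y : Ω → ℝ} {M : ℝ}
    (hXY : upExp Ps X < upExp Ps Y) (hXM : upExp Ps X < M) :
    {a' | ∀ a'', upExp Ps (twoActionLoss a b X Y M a') ≤
      upExp Ps (twoActionLoss a b X Y M a'')} = {a} := by
  refine setOf_forall_le_eq_singleton fun a' ha' => ?_
  rw [twoActionLoss_left]
  by_cases hb : a' = b
  · simpa [twoActionLoss, hb, hab.symm] using hXY
  · simpa [twoActionLoss, ha', hb, upExp_const hne hPs] using hXM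

end TwoActionLoss

theorem strong_propriety_general
    {Ω 𝒜 : Type*} [Fintype Ω] [Fintype 𝒜]
    (h𝒜 : 2 ≤ Fintype.card 𝒜)
    (Ps Qs : Set (Ω → ℝ)) (hPsne : Ps.Nonempty) (hQsne : Qs.Nonempty)
    (hPs : ∀ P ∈ Ps, IsProb P) (hQs : ∀ Q ∈ Qs, IsProb Q)
    (hdist : closure (convexHull ℝ Ps) ≠ closure (convexHull ℝ Qs)) :
    ∃ (ℓ : 𝒜 → Ω → ℝ) (aP aQ : 𝒜),
      {a : 𝒜 | ∀ a' : 𝒜, upExp Ps (ℓ a) ≤ upExp Ps (ℓ a')} = {aP} ∧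
      {a : 𝒜 | ∀ a' : 𝒜, upExp Qs (ℓ a) ≤ upExp Qs (ℓ a')} = {aQ} ∧
      aP ≠ aQ ∧
      upExp Ps (ℓ aP) < upExp Ps (ℓ aQ) := by
  classical
  obtain ⟨aP, aQ, hne⟩ := Fintype.exists_pair_of_one_lt_card h𝒜
  obtain ⟨X, Y, hP, hQ⟩ := exists_upExp_crossing hPsne hQsne hPs hQs hdist
  set M := max (upExp Ps X) (upExp Qs Y) + 1
  have hPM : upExp Ps X < M := by linarith [le_max_left (upExp Ps X) (upExp Qs Y)]
  have hQM : upExp Qs Y < M := by linarith [le_max_right (upExp Ps X) (upExp Qs Y)]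
  refine ⟨twoActionLoss aP aQ X Y M, aP, aQ,
    argmin_upExp_twoActionLoss hPsne hPs hne hP hPM, ?_, hne, ?_⟩
  · rw [twoActionLoss_comm hne]
    exact argmin_upExp_twoActionLoss hQsne hQs hne.symm hQ hQM
  · rwa [twoActionLoss_left, twoActionLoss_comm hne, twoActionLoss_left]

/-- "Strong" propriety: if the nonempty sets of probability measures `Ps` and `Qs` have
distinct closed convex hulls, then there is a loss function for which both MinMax action
recommendations are unique, they differ, and under the `Ps` data model the IP score of
the forecast `Ps` is strictly smaller than that of the forecast `Qs`. -/
theorem strong_propriety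
    {Ω 𝒜 : Type*} [Fintype Ω] [Fintype 𝒜]
    (hΩ : 2 ≤ Fintype.card Ω) (h𝒜 : 2 ≤ Fintype.card 𝒜)
    (Ps Qs : Set (Ω → ℝ)) (hPsne : Ps.Nonempty) (hQsne : Qs.Nonempty)
    (hPs : ∀ P ∈ Ps, IsProb P) (hQs : ∀ Q ∈ Qs, IsProb Q)
    (hdist : closure (convexHull ℝ Ps) ≠ closure (convexHull ℝ Qs)) :
    ∃ (ℓ : 𝒜 → Ω → ℝ) (aP aQ : 𝒜),
      {a : 𝒜 | ∀ a' : 𝒜, upExp Ps (ℓ a) ≤ upExp Ps (ℓ a')} = {aP} ∧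
      {a : 𝒜 | ∀ a' : 𝒜, upExp Qs (ℓ a) ≤ upExp Qs (ℓ a')} = {aQ} ∧
      aP ≠ aQ ∧
      upExp Ps (ℓ aP) < upExp Ps (ℓ aQ) :=
  strong_propriety_general h𝒜 Ps Qs hPsne hQsne hPs hQs hdist
end

section
/- (Maximum-entropy saddle point with a unique Bayes action.) Let Ω be a finite set, 𝒜 a finite action set, ℓ : 𝒜 × Ω → ℝ a loss function, and 𝒫 a nonempty convex set of probability measures on Ω. Suppose P* ∈ 𝒫 satisfies min_{a∈𝒜} E_{P*}[ℓ(a,·)] ≥ min_{a∈𝒜} E_P[ℓ(a,·)] for all P ∈ 𝒫 (P* maximizes the generalized ℓ-entropy over 𝒫), and that argmin_{a∈𝒜} E_{P*}[ℓ(a,·)] = {a*} is a singleton. Then min_{a∈𝒜} sup_{P∈𝒫} E_P[ℓ(a,·)] = sup_{P∈𝒫} min_{a∈𝒜} E_P[ℓ(a,·)] = E_{P*}[ℓ(a*,·)] = sup_{P∈𝒫} E_P[ℓ(a*,·)]. -/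
lemma expct_combo {Ω : Type*} [Fintype Ω] (s t : ℝ) (P Q Z : Ω → ℝ) :
    expct (s • P + t • Q) Z = s * expct P Z + t * expct Q Z := by
  simp only [expct, Pi.add_apply, Pi.smul_apply, smul_eq_mul, Finset.mul_sum,
    ← Finset.sum_add_distrib]
  exact Finset.sum_congr rfl fun ω _ => by ring

lemma expct_le_sup' {Ω : Type*} [Fintype Ω] (h : (Finset.univ : Finset Ω).Nonempty)
    {P : Ω → ℝ} (hP : IsProb P) (Z : Ω → ℝ) :
    expct P Z ≤ Finset.univ.sup' h Z := by
  calc expct P Z ≤ ∑ ω, P ω * Finset.univ.sup' h Z :=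
        Finset.sum_le_sum fun ω _ =>
          mul_le_mul_of_nonneg_left (Finset.le_sup' _ (Finset.mem_univ ω)) (hP.1 ω)
    _ = Finset.univ.sup' h Z := by rw [← Finset.sum_mul, hP.2, one_mul]

/-- Maximum-entropy saddle point with a unique Bayes action: if `Pstar ∈ Ps` maximizes the
generalized `ℓ`-entropy `P ↦ min_a E_P[ℓ a]` over a convex set `Ps` of probability
measures and its Bayes action `astar` is unique, then
`min_a sup_{P∈Ps} E_P[ℓ a] = sup_{P∈Ps} min_a E_P[ℓ a] = E_{Pstar}[ℓ astar]
 = sup_{P∈Ps} E_P[ℓ astar]`. -/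
theorem maxent_saddle_point
    {Ω 𝒜 : Type*} [Fintype Ω] [Fintype 𝒜] [Nonempty 𝒜]
    (ℓ : 𝒜 → Ω → ℝ)
    (Ps : Set (Ω → ℝ)) (hPsne : Ps.Nonempty)
    (hPs : ∀ P ∈ Ps, IsProb P) (hconv : Convex ℝ Ps)
    (Pstar : Ω → ℝ) (hPstar : Pstar ∈ Ps)
    (hmaxent : ∀ P ∈ Ps, (⨅ a : 𝒜, expct P (ℓ a)) ≤ ⨅ a : 𝒜, expct Pstar (ℓ a))
    (astar : 𝒜)
    (huniq : {a : 𝒜 | ∀ a' : 𝒜, expct Pstar (ℓ a) ≤ expct Pstar (ℓ a')} = {astar}) :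
    (⨅ a : 𝒜, upExp Ps (ℓ a)) = sSup ((fun P => ⨅ a : 𝒜, expct P (ℓ a)) '' Ps) ∧
    (⨅ a : 𝒜, upExp Ps (ℓ a)) = expct Pstar (ℓ astar) ∧
    (⨅ a : 𝒜, upExp Ps (ℓ a)) = upExp Ps (ℓ astar) := by
  -- Ω is nonempty, since a probability measure on it exists
  have hΩ : (Finset.univ : Finset Ω).Nonempty := by
    by_contra hemp
    rw [Finset.not_nonempty_iff_eq_empty] at hemp
    have := (hPs Pstar hPstar).2
    rw [hemp] at this
    simp at this
  -- astar is a minimizer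
  have hastar : ∀ a', expct Pstar (ℓ astar) ≤ expct Pstar (ℓ a') := by
    have : astar ∈ {a : 𝒜 | ∀ a' : 𝒜, expct Pstar (ℓ a) ≤ expct Pstar (ℓ a')} := by
      rw [huniq]; rfl
    exact this
  -- strict gap for a ≠ astar
  have hgap : ∀ a : 𝒜, a ≠ astar → expct Pstar (ℓ astar) < expct Pstar (ℓ a) := by
    intro a ha
    by_contra h
    push_neg at h
    have hmem : a ∈ {a : 𝒜 | ∀ a' : 𝒜, expct Pstar (ℓ a) ≤ expct Pstar (ℓ a')} :=
      fun a' => le_trans (le_antisymm h (hastar a)).le (hastar a')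
    rw [huniq] at hmem
    exact ha hmem
  -- inf over 𝒜 for Pstar
  have hinfstar : (⨅ a : 𝒜, expct Pstar (ℓ a)) = expct Pstar (ℓ astar) :=
    le_antisymm (ciInf_le (Set.Finite.bddBelow (Set.finite_range _)) astar)
      (le_ciInf hastar)
  -- Key claim: Pstar maximizes expct · (ℓ astar) over Ps
  have hkey : ∀ P ∈ Ps, expct P (ℓ astar) ≤ expct Pstar (ℓ astar) := by
    intro P hP
    classical
    by_contra hgt
    push_neg at hgt
    set g : 𝒜 → ℝ := fun a => expct Pstar (ℓ a) - expct Pstar (ℓ astar) with hg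
    set h : 𝒜 → ℝ := fun a => expct P (ℓ a) - expct P (ℓ astar) with hh
    set f : 𝒜 → ℝ := fun a => if a = astar then 1 else g a / (1 + |g a| + |h a|) with hf
    have hfpos : ∀ a, 0 < f a := by
      intro a
      by_cases ha : a = astar
      · simp [hf, ha]
      · have hga : 0 < g a := sub_pos.2 (hgap a ha)
        have hb : (0:ℝ) < 1 + |g a| + |h a| := by positivity
        simp only [hf, ha, if_false]
        positivity
    set t : ℝ := Finset.univ.inf' Finset.univ_nonempty f with ht
    have htpos : 0 < t := by
      rw [ht]
      exact (Finset.lt_inf'_iff _).2 fun a _ => hfpos a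
    have htle1 : t ≤ 1 := by
      have h0 : f astar = 1 := by simp [hf]
      exact h0 ▸ Finset.inf'_le f (Finset.mem_univ astar)
    set Pt : Ω → ℝ := (1 - t) • Pstar + t • P with hPt
    have hPtmem : Pt ∈ Ps := hconv hPstar hP (by linarith) htpos.le (by ring)
    have hPtex : ∀ Z, expct Pt Z = (1 - t) * expct Pstar Z + t * expct P Z :=
      fun Z => expct_combo _ _ _ _ _
    -- astar minimizes under Pt
    have hmin : ∀ a, expct Pt (ℓ astar) ≤ expct Pt (ℓ a) := by
      intro a
      by_cases ha : a = astar
      · simp [ha]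
      · have hga : 0 < g a := sub_pos.2 (hgap a ha)
        have hb : (0:ℝ) < 1 + |g a| + |h a| := by positivity
        have htf : t ≤ g a / (1 + |g a| + |h a|) := by
          have h0 : f a = g a / (1 + |g a| + |h a|) := if_neg ha
          exact h0 ▸ Finset.inf'_le f (Finset.mem_univ a)
        have h1 : t * (1 + |g a| + |h a|) ≤ g a := (le_div_iff₀ hb).mp htf
        have hag : |g a| ≥ g a - h a - |h a| := by
          have := le_abs_self (g a)
          have := neg_abs_le (h a)
          linarith
        have h2 : t * (g a - h a) ≤ g a := by
          have habs : g a - h a ≤ 1 + |g a| + |h a| := by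
            have := le_abs_self (g a)
            have := neg_abs_le (h a)
            linarith
          calc t * (g a - h a) ≤ t * (1 + |g a| + |h a|) :=
                mul_le_mul_of_nonneg_left habs htpos.le
            _ ≤ g a := h1
        have hexp : expct Pt (ℓ a) - expct Pt (ℓ astar) = (1 - t) * g a + t * h a := by
          rw [hPtex, hPtex]; simp only [hg, hh]; ring
        nlinarith [hexp]
    have hinfPt : (⨅ a : 𝒜, expct Pt (ℓ a)) = expct Pt (ℓ astar) :=
      le_antisymm (ciInf_le (Set.Finite.bddBelow (Set.finite_range _)) astar)
        (le_ciInf hmin)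
    have hme := hmaxent Pt hPtmem
    rw [hinfPt, hinfstar, hPtex] at hme
    nlinarith
  set Estar := expct Pstar (ℓ astar) with hE
  -- upExp at astar
  have hup : upExp Ps (ℓ astar) = Estar := by
    apply le_antisymm
    · exact csSup_le (hPsne.image _) (by rintro x ⟨P, hP, rfl⟩; exact hkey P hP)
    · exact le_csSup ⟨Estar, by rintro x ⟨P, hP, rfl⟩; exact hkey P hP⟩
        ⟨Pstar, hPstar, rfl⟩
  -- bounded above sets for each a
  have hbdd : ∀ a : 𝒜, BddAbove ((fun P => expct P (ℓ a)) '' Ps) := by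
    intro a
    refine ⟨Finset.univ.sup' hΩ (ℓ a), ?_⟩
    rintro x ⟨P, hP, rfl⟩
    exact expct_le_sup' hΩ (hPs P hP) (ℓ a)
  -- upExp Ps (ℓ a) ≥ Estar for each a
  have hge : ∀ a : 𝒜, Estar ≤ upExp Ps (ℓ a) := fun a =>
    le_trans (hastar a) (le_csSup (hbdd a) ⟨Pstar, hPstar, rfl⟩)
  -- the minimax value
  have hminimax : (⨅ a : 𝒜, upExp Ps (ℓ a)) = Estar := by
    apply le_antisymm
    · calc (⨅ a : 𝒜, upExp Ps (ℓ a)) ≤ upExp Ps (ℓ astar) :=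
            ciInf_le (Set.Finite.bddBelow (Set.finite_range _)) astar
        _ = Estar := hup
    · exact le_ciInf hge
  -- the maximin value
  have hmaximin : sSup ((fun P => ⨅ a : 𝒜, expct P (ℓ a)) '' Ps) = Estar := by
    apply le_antisymm
    · refine csSup_le (hPsne.image _) ?_
      rintro x ⟨P, hP, rfl⟩
      exact le_trans (hmaxent P hP) hinfstar.le
    · refine le_csSup ⟨Estar, ?_⟩ ⟨Pstar, hPstar, hinfstar⟩
      rintro x ⟨P, hP, rfl⟩
      exact le_trans (hmaxent P hP) hinfstar.le
  exact ⟨hminimax.trans hmaximin.symm, hminimax, hminimax.trans hup.symm⟩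
end

section
/- (Characterization of the generalized Bayes rule.) Let Ω be a finite set, 𝒫 a nonempty set of probability measures on Ω, and B ⊆ Ω with inf_{P∈𝒫} P(B) > 0. Then for every gamble Z : Ω → ℝ, the number GBR_𝒫(Z|B) := sup_{P∈𝒫} E_{P(·|B)}[Z] is the unique real α satisfying sup_{P∈𝒫} E_P[1_B·(Z − α)] = 0; in particular GBR_𝒫(Z|B) = min{α ∈ ℝ : sup_{P∈𝒫} E_P[1_B·(Z − α)] = 0} and this minimum is attained. -/
/-- The probability `P(B)` of the event `B`. -/
noncomputable def probOf {Ω : Type*} [Fintype Ω] (P : Ω → ℝ) (B : Set Ω) : ℝ :=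
  ∑ ω, B.indicator P ω

/-- The conditional probability measure `P(· | B)`. -/
noncomputable def condB {Ω : Type*} [Fintype Ω] (P : Ω → ℝ) (B : Set Ω) : Ω → ℝ :=
  fun ω => B.indicator P ω / probOf P B

/-! For `P ∈ 𝒫` write `b P = P(B)` and `c P = E_{P(·|B)}[Z]`, so that
`E_P[1_B (Z - α)] = b P (c P - α)` and `GBR = g := sup c`. The weights `b` lie in `[δ, 1]`
with `δ = inf b > 0`, so `sup_P b P (c P - α)` is positive for `α < g` (some `c P > α`),
at most `δ (g - α) < 0` for `α > g`, and `0` at `α = g`: every term is `≤ 0`, and a term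
with `c P` close to `g` is close to `0` because `b` is bounded. -/

section ScaledGaps

variable {ι : Type*} {s : Set ι} {b c : ι → ℝ}

lemma bddAbove_image_mul_sub (hb₀ : ∀ i ∈ s, 0 ≤ b i) (hb : BddAbove (b '' s))
    (hc : BddAbove (c '' s)) (α : ℝ) : BddAbove ((fun i => b i * (c i - α)) '' s) := by
  obtain ⟨M, hM⟩ := hb
  obtain ⟨m, hm⟩ := hc
  refine ⟨M * |m - α|, ?_⟩
  rintro _ ⟨i, hi, rfl⟩
  have hbi : b i ≤ M := hM ⟨i, hi, rfl⟩
  have hci : c i ≤ m := hm ⟨i, hi, rfl⟩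
  calc b i * (c i - α) ≤ b i * |m - α| :=
        mul_le_mul_of_nonneg_left ((sub_le_sub_right hci α).trans (le_abs_self _)) (hb₀ i hi)
    _ ≤ M * |m - α| := mul_le_mul_of_nonneg_right hbi (abs_nonneg _)

lemma sSup_image_mul_sub_pos (hs : s.Nonempty) (hb₀ : ∀ i ∈ s, 0 < b i)
    (hb : BddAbove (b '' s)) (hc : BddAbove (c '' s)) {α : ℝ} (hα : α < sSup (c '' s)) :
    0 < sSup ((fun i => b i * (c i - α)) '' s) := by
  obtain ⟨_, ⟨i, hi, rfl⟩, hci⟩ := exists_lt_of_lt_csSup (hs.image c) hα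
  calc 0 < b i * (c i - α) := mul_pos (hb₀ i hi) (sub_pos.2 hci)
    _ ≤ _ := le_csSup (bddAbove_image_mul_sub (fun j hj => (hb₀ j hj).le) hb hc α)
        ⟨i, hi, rfl⟩

lemma sSup_image_mul_sub_neg (hs : s.Nonempty) {δ : ℝ} (hδ : 0 < δ)
    (hδb : ∀ i ∈ s, δ ≤ b i) (hc : BddAbove (c '' s)) {α : ℝ} (hα : sSup (c '' s) < α) :
    sSup ((fun i => b i * (c i - α)) '' s) < 0 := by
  refine (csSup_le (hs.image _) ?_).trans_lt (mul_neg_of_pos_of_neg hδ (sub_neg.2 hα))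
  rintro _ ⟨i, hi, rfl⟩
  have hci : c i ≤ sSup (c '' s) := le_csSup hc ⟨i, hi, rfl⟩
  have hbi := hδb i hi
  calc b i * (c i - α) ≤ b i * (sSup (c '' s) - α) :=
        mul_le_mul_of_nonneg_left (by linarith) (hδ.le.trans hbi)
    _ ≤ δ * (sSup (c '' s) - α) := mul_le_mul_of_nonpos_right hbi (by linarith)

lemma sSup_image_mul_sub_csSup (hs : s.Nonempty) (hb₀ : ∀ i ∈ s, 0 < b i)
    (hb : BddAbove (b '' s)) (hc : BddAbove (c '' s)) :
    sSup ((fun i => b i * (c i - sSup (c '' s))) '' s) = 0 := by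
  set g := sSup (c '' s)
  have hcg : ∀ i ∈ s, c i ≤ g := fun i hi => le_csSup hc ⟨i, hi, rfl⟩
  refine le_antisymm (csSup_le (hs.image _) ?_) (not_lt.1 fun hσ => ?_)
  · rintro _ ⟨i, hi, rfl⟩
    exact mul_nonpos_of_nonneg_of_nonpos (hb₀ i hi).le (sub_nonpos.2 (hcg i hi))
  · set σ := sSup ((fun i => b i * (c i - g)) '' s)
    obtain ⟨M, hM⟩ := hb
    obtain ⟨i₀, hi₀⟩ := hs
    have hM₀ : 0 < M := (hb₀ i₀ hi₀).trans_le (hM ⟨i₀, hi₀, rfl⟩)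
    have hcσ : ∀ i ∈ s, c i ≤ g + σ / M := by
      intro i hi
      have hterm : b i * (c i - g) ≤ σ :=
        le_csSup (bddAbove_image_mul_sub (fun j hj => (hb₀ j hj).le) ⟨M, hM⟩ hc g)
          ⟨i, hi, rfl⟩
      have hscale : M * (c i - g) ≤ b i * (c i - g) :=
        mul_le_mul_of_nonpos_right (hM ⟨i, hi, rfl⟩) (sub_nonpos.2 (hcg i hi))
      rw [← sub_le_iff_le_add', le_div_iff₀ hM₀, mul_comm]
      exact hscale.trans hterm
    have hg : g ≤ g + σ / M :=
      csSup_le ⟨_, i₀, hi₀, rfl⟩ (by rintro _ ⟨i, hi, rfl⟩; exact hcσ i hi)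
    linarith [div_neg_of_neg_of_pos hσ hM₀]

theorem sSup_image_mul_sub_eq_zero_iff (hs : s.Nonempty) {δ : ℝ} (hδ : 0 < δ)
    (hδb : ∀ i ∈ s, δ ≤ b i) (hb : BddAbove (b '' s)) (hc : BddAbove (c '' s)) (α : ℝ) :
    sSup ((fun i => b i * (c i - α)) '' s) = 0 ↔ α = sSup (c '' s) := by
  have hb₀ : ∀ i ∈ s, 0 < b i := fun i hi => hδ.trans_le (hδb i hi)
  refine ⟨fun h => ?_, fun h => h ▸ sSup_image_mul_sub_csSup hs hb₀ hb hc⟩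
  rcases lt_trichotomy α (sSup (c '' s)) with hlt | heq | hgt
  · exact absurd h (sSup_image_mul_sub_pos hs hb₀ hb hc hlt).ne'
  · exact heq
  · exact absurd h (sSup_image_mul_sub_neg hs hδ hδb hc hgt).ne

end ScaledGaps

section FiniteProbability

variable {Ω : Type*} [Fintype Ω] {P : Ω → ℝ}

lemma IsProb.probOf_nonneg (hP : IsProb P) (B : Set Ω) : 0 ≤ probOf P B :=
  Finset.sum_nonneg fun ω _ => B.indicator_nonneg (fun ω _ => hP.1 ω) ω

lemma IsProb.probOf_le_one (hP : IsProb P) (B : Set Ω) : probOf P B ≤ 1 :=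
  hP.2 ▸ Finset.sum_le_sum fun ω _ => B.indicator_le_self' (fun ω _ => hP.1 ω) ω

lemma IsProb.expct_le (hP : IsProb P) {Z : Ω → ℝ} {m : ℝ} (hZ : ∀ ω, Z ω ≤ m) :
    expct P Z ≤ m :=
  calc expct P Z ≤ ∑ ω, P ω * m :=
        Finset.sum_le_sum fun ω _ => mul_le_mul_of_nonneg_left (hZ ω) (hP.1 ω)
    _ = m := by rw [← Finset.sum_mul, hP.2, one_mul]

lemma isProb_condB (hP : IsProb P) {B : Set Ω} (hB : 0 < probOf P B) :
    IsProb (condB P B) :=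
  ⟨fun ω => div_nonneg (B.indicator_nonneg (fun ω _ => hP.1 ω) ω) hB.le,
    by
      simp only [condB, ← Finset.sum_div]
      exact div_self hB.ne'⟩

lemma expct_indicator_sub {B : Set Ω} (hB : probOf P B ≠ 0) (Z : Ω → ℝ) (α : ℝ) :
    expct P (B.indicator fun ω => Z ω - α) = probOf P B * (expct (condB P B) Z - α) := by
  have hcond : probOf P B * expct (condB P B) Z = ∑ ω, B.indicator P ω * Z ω := by
    simp only [expct, condB, Finset.mul_sum]
    exact Finset.sum_congr rfl fun ω _ => by field_simp
  rw [mul_sub, hcond, probOf, Finset.sum_mul, ← Finset.sum_sub_distrib, expct]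
  refine Finset.sum_congr rfl fun ω _ => ?_
  by_cases hω : ω ∈ B <;> simp [hω, mul_sub]

end FiniteProbability

/-- Characterization of the generalized Bayes rule: if `inf_{P∈Ps} P(B) > 0`, then for
every gamble `Z`, `GBR_Ps(Z|B) := sup_{P∈Ps} E_{P(·|B)}[Z]` is the unique real `α` with
`sup_{P∈Ps} E_P[1_B·(Z − α)] = 0`, and it is the least element of the set of such `α`
(so the minimum is attained). -/
theorem gbr_characterization
    {Ω : Type*} [Fintype Ω]
    (Ps : Set (Ω → ℝ)) (hPsne : Ps.Nonempty) (hPs : ∀ P ∈ Ps, IsProb P)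
    (B : Set Ω) (hB : 0 < sInf ((fun P => probOf P B) '' Ps)) :
    ∀ Z : Ω → ℝ,
      (∀ α : ℝ,
        sSup ((fun P => expct P (B.indicator (fun ω => Z ω - α))) '' Ps) = 0
          ↔ α = sSup ((fun P => expct (condB P B) Z) '' Ps)) ∧
      IsLeast {α : ℝ |
          sSup ((fun P => expct P (B.indicator (fun ω => Z ω - α))) '' Ps) = 0}
        (sSup ((fun P => expct (condB P B) Z) '' Ps)) := by
  intro Z
  have hinf : ∀ P ∈ Ps, sInf ((fun P => probOf P B) '' Ps) ≤ probOf P B := fun P hP =>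
    csInf_le ⟨0, by rintro _ ⟨Q, hQ, rfl⟩; exact (hPs Q hQ).probOf_nonneg B⟩ ⟨P, hP, rfl⟩
  have hpos : ∀ P ∈ Ps, 0 < probOf P B := fun P hP => hB.trans_le (hinf P hP)
  have hprob_bdd : BddAbove ((fun P => probOf P B) '' Ps) :=
    ⟨1, by rintro _ ⟨P, hP, rfl⟩; exact (hPs P hP).probOf_le_one B⟩
  obtain ⟨m, hm⟩ := (Set.finite_range Z).bddAbove
  have hcond_bdd : BddAbove ((fun P => expct (condB P B) Z) '' Ps) :=
    ⟨m, by
      rintro _ ⟨P, hP, rfl⟩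
      exact (isProb_condB (hPs P hP) (hpos P hP)).expct_le fun ω => hm ⟨ω, rfl⟩⟩
  have hiff : ∀ α : ℝ,
      sSup ((fun P => expct P (B.indicator (fun ω => Z ω - α))) '' Ps) = 0
        ↔ α = sSup ((fun P => expct (condB P B) Z) '' Ps) := fun α => by
    rw [Set.image_congr fun P hP => expct_indicator_sub (hpos P hP).ne' Z α]
    exact sSup_image_mul_sub_eq_zero_iff hPsne hB hinf hprob_bdd hcond_bdd α
  exact ⟨hiff, (hiff _).2 rfl, fun α hα => ((hiff α).1 hα).ge⟩
end

section
/- (The entropy inequality between calibrated forecasts can be strict.) There exist a finite set Ω, a finite action set 𝒜, a loss function ℓ : 𝒜 × Ω → ℝ, and probability measures p and q on Ω with unique Bayes actions a_p and a_q (i.e., argmin_{a∈𝒜} E_p[ℓ(a,·)] = {a_p} and argmin_{a∈𝒜} E_q[ℓ(a,·)] = {a_q}) such that E_p[ℓ(a_q,·)] = E_q[ℓ(a_q,·)] (so the precise forecast q is ℓ-calibrated under the p data model), while min_{a∈𝒜} E_p[ℓ(a,·)] < E_q[ℓ(a_q,·)] (the ℓ-entropy of the data model is strictly smaller than the ℓ-entropy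 of the calibrated competitor q). -/
/-- The entropy inequality between calibrated forecasts can be strict: there exist a
finite set `Ω = Fin n`, a finite action set `𝒜 = Fin m` (with at least two actions),
a loss `ℓ` and probability measures `p, q` with unique Bayes actions `ap, aq` such that
`E_p[ℓ aq] = E_q[ℓ aq]` (so `q` is `ℓ`-calibrated under the `p` data model), while
`min_a E_p[ℓ a] < E_q[ℓ aq]`. -/
theorem calibrated_entropy_gap_can_be_strict :
    ∃ (n m : ℕ) (ℓ : Fin m → Fin n → ℝ) (p q : Fin n → ℝ) (ap aq : Fin m),
      2 ≤ m ∧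
      IsProb p ∧ IsProb q ∧
      {a : Fin m | ∀ a' : Fin m, expct p (ℓ a) ≤ expct p (ℓ a')} = {ap} ∧
      {a : Fin m | ∀ a' : Fin m, expct q (ℓ a) ≤ expct q (ℓ a')} = {aq} ∧
      expct p (ℓ aq) = expct q (ℓ aq) ∧
      (⨅ a : Fin m, expct p (ℓ a)) < expct q (ℓ aq) := by
  refine ⟨2, 2, fun a ω => if a = 0 then (if ω = 0 then 2 else 0) else 1,
    fun ω => if ω = 0 then 1/4 else 3/4, fun ω => if ω = 0 then 1 else 0, 0, 1,
    le_refl 2, ?_, ?_, ?_, ?_, ?_, ?_⟩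
  · exact ⟨fun ω => by fin_cases ω <;> norm_num, by simp [Fin.sum_univ_two]; norm_num⟩
  · exact ⟨fun ω => by fin_cases ω <;> norm_num, by simp [Fin.sum_univ_two]⟩
  · ext a
    simp only [Set.mem_setOf_eq, Set.mem_singleton_iff]
    constructor
    · intro h
      have := h 0
      fin_cases a
      · rfl
      · simp [expct, Fin.sum_univ_two] at this; norm_num at this
    · rintro rfl a'
      fin_cases a' <;> simp [expct, Fin.sum_univ_two] <;> try norm_num
  · ext a
    simp only [Set.mem_setOf_eq, Set.mem_singleton_iff]
    constructor
    · intro h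
      have := h 1
      fin_cases a
      · exfalso; norm_num [expct, Fin.sum_univ_two] at this
      · rfl
    · rintro rfl a'
      fin_cases a' <;> simp [expct, Fin.sum_univ_two] <;> try norm_num
  · simp [expct, Fin.sum_univ_two]; norm_num
  · have h1 : (⨅ a : Fin 2, expct (fun ω : Fin 2 => if ω = 0 then (1:ℝ)/4 else 3/4)
        ((fun a ω => if a = 0 then (if ω = 0 then (2:ℝ) else 0) else 1) a)) ≤
        expct (fun ω : Fin 2 => if ω = 0 then (1:ℝ)/4 else 3/4)
        (fun ω => if (0 : Fin 2) = 0 then (if ω = 0 then (2:ℝ) else 0) else 1) := by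
      exact ciInf_le (Set.Finite.bddBelow (Set.finite_range _)) 0
    refine lt_of_le_of_lt h1 ?_
    simp [expct, Fin.sum_univ_two]; norm_num
end

section
/- (IP score bound from calibration and entropy.) Let Ω be a finite set, 𝒜 a finite action set, ℓ : 𝒜 × Ω → ℝ a nonnegative loss function, 𝒫 a nonempty set of probability measures on Ω, and ℬ a partition of Ω with inf_{P∈𝒫} P(B) > 0 for every B ∈ ℬ. For each B ∈ ℬ, let 𝒬_B ⊆ Δ be nonempty and let a_B ∈ 𝒜 minimize a ↦ sup_{Q∈𝒬_B} E_Q[ℓ(a,·)], and suppose the forecast is calibrated on each block: sup_{P∈𝒫} E_{P(·|B)}[ℓ(a_B,·)] = sup_{Q∈𝒬_B} E_Q[ℓ(a_B,·)] =: H_B for every B ∈ ℬ. Then sup_{P∈𝒫} E_P[ω ↦ ℓ(a_{B(ω)},ω)] ≤ Σ_{B∈ℬ} H_B · sup_{P∈𝒫} P(B), where B(ω) denotes the block of ℬ containing ω. -/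
/-- IP score bound from calibration and entropy: for a blockwise (`ℬ`-measurable)
forecast `Qs` with MinMax actions `aB`, calibrated on each block of the partition `ℬ`
with common entropy value `H B`, the IP score of the induced action map is bounded by
`Σ_{B∈ℬ} H B · sup_{P∈Ps} P(B)`. -/
theorem ip_score_bound_from_calibration
    {Ω 𝒜 : Type*} [Fintype Ω] [Fintype 𝒜]
    (ℓ : 𝒜 → Ω → ℝ) (hℓ : ∀ (a : 𝒜) (ω : Ω), 0 ≤ ℓ a ω)
    (Ps : Set (Ω → ℝ)) (hPsne : Ps.Nonempty) (hPs : ∀ P ∈ Ps, IsProb P)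
    (ℬ : Finset (Set Ω)) (hpart : Setoid.IsPartition (↑ℬ : Set (Set Ω)))
    (hpos : ∀ B ∈ ℬ, 0 < sInf ((fun P => probOf P B) '' Ps))
    (Qs : Set Ω → Set (Ω → ℝ))
    (hQsne : ∀ B ∈ ℬ, (Qs B).Nonempty) (hQs : ∀ B ∈ ℬ, ∀ Q ∈ Qs B, IsProb Q)
    (aB : Set Ω → 𝒜)
    (haB : ∀ B ∈ ℬ, ∀ a : 𝒜, upExp (Qs B) (ℓ (aB B)) ≤ upExp (Qs B) (ℓ a))
    (H : Set Ω → ℝ)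
    (hcal : ∀ B ∈ ℬ,
      sSup ((fun P => expct (condB P B) (ℓ (aB B))) '' Ps) = H B ∧
      upExp (Qs B) (ℓ (aB B)) = H B)
    (blk : Ω → Set Ω)
    (hblk : ∀ ω : Ω, blk ω ∈ ℬ ∧ ω ∈ blk ω) :
    upExp Ps (fun ω => ℓ (aB (blk ω)) ω)
      ≤ ∑ B ∈ ℬ, H B * sSup ((fun P => probOf P B) '' Ps) := by

  have key : ∀ P ∈ Ps, ∀ B ∈ ℬ, 0 < probOf P B := by
    intro P hP B hB
    refine lt_of_lt_of_le (hpos B hB) (csInf_le ?_ ⟨P, hP, rfl⟩)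
    refine ⟨0, ?_⟩
    rintro x ⟨Q, hQ, rfl⟩
    exact Finset.sum_nonneg fun ω _ => Set.indicator_nonneg (fun ω _ => (hPs Q hQ).1 ω) ω
  -- indicator sum bounded above
  have hindle : ∀ P ∈ Ps, ∀ B : Set Ω, ∀ ω, B.indicator P ω ≤ probOf P B := by
    intro P hP B ω
    exact Finset.single_le_sum (f := fun ω => B.indicator P ω)
      (fun ω _ => Set.indicator_nonneg (fun ω _ => (hPs P hP).1 ω) ω) (Finset.mem_univ ω)
  have hcondnn : ∀ P ∈ Ps, ∀ B : Set Ω, ∀ ω, 0 ≤ condB P B ω := by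
    intro P hP B ω
    exact div_nonneg (Set.indicator_nonneg (fun ω _ => (hPs P hP).1 ω) ω)
      ((Finset.sum_nonneg fun ω _ => Set.indicator_nonneg (fun ω _ => (hPs P hP).1 ω) ω))
  have hcondle1 : ∀ P ∈ Ps, ∀ B : Set Ω, ∀ ω, condB P B ω ≤ 1 := by
    intro P hP B ω
    unfold condB
    rcases le_or_gt (probOf P B) 0 with h | h
    · have hnn : 0 ≤ probOf P B :=
        Finset.sum_nonneg fun ω _ => Set.indicator_nonneg (fun ω _ => (hPs P hP).1 ω) ω
      rw [le_antisymm h hnn]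
      simp
    · exact (div_le_one h).mpr (hindle P hP B ω)
  -- bddAbove of cond-expectation image
  have hbddc : ∀ B : Set Ω, BddAbove ((fun P => expct (condB P B) (ℓ (aB B))) '' Ps) := by
    intro B
    refine ⟨∑ ω, ℓ (aB B) ω, ?_⟩
    rintro x ⟨P, hP, rfl⟩
    refine Finset.sum_le_sum fun ω _ => ?_
    calc condB P B ω * ℓ (aB B) ω ≤ 1 * ℓ (aB B) ω :=
          mul_le_mul_of_nonneg_right (hcondle1 P hP B ω) (hℓ _ ω)
      _ = ℓ (aB B) ω := one_mul _
  have hbddp : ∀ B : Set Ω, BddAbove ((fun P => probOf P B) '' Ps) := by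
    intro B
    refine ⟨1, ?_⟩
    rintro x ⟨P, hP, rfl⟩
    calc probOf P B ≤ ∑ ω, P ω :=
          Finset.sum_le_sum fun ω _ => Set.indicator_le_self' (fun ω _ => (hPs P hP).1 ω) ω
      _ = 1 := (hPs P hP).2
  have hHnn : ∀ B ∈ ℬ, 0 ≤ H B := by
    intro B hB
    rw [← (hcal B hB).1]
    obtain ⟨P0, hP0⟩ := hPsne
    refine le_trans ?_ (le_csSup (hbddc B) ⟨P0, hP0, rfl⟩)
    exact Finset.sum_nonneg fun ω _ => mul_nonneg (hcondnn P0 hP0 B ω) (hℓ _ ω)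
  refine csSup_le (hPsne.image _) ?_
  rintro x ⟨P, hP, rfl⟩
  have step1 : expct P (fun ω => ℓ (aB (blk ω)) ω)
      = ∑ B ∈ ℬ, ∑ ω, B.indicator P ω * ℓ (aB B) ω := by
    rw [Finset.sum_comm]
    refine Finset.sum_congr rfl fun ω _ => ?_
    rw [Finset.sum_eq_single (blk ω)]
    · rw [Set.indicator_of_mem (hblk ω).2]
    · intro B hB hne
      have hωB : ω ∉ B := by
        intro hωB
        obtain ⟨y, hy, huniq⟩ := hpart.2 ω
        have h1 := huniq B ⟨hB, hωB⟩
        have h2 := huniq (blk ω) ⟨(hblk ω).1, (hblk ω).2⟩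
        exact hne (h1.trans h2.symm)
      rw [Set.indicator_of_notMem hωB, zero_mul]
    · intro h; exact absurd (hblk ω).1 h
  have step2 : ∀ B ∈ ℬ, ∑ ω, B.indicator P ω * ℓ (aB B) ω
      = probOf P B * expct (condB P B) (ℓ (aB B)) := by
    intro B hB
    have hpB := (key P hP B hB).ne'
    unfold expct condB
    rw [Finset.mul_sum]
    refine Finset.sum_congr rfl fun ω _ => ?_
    field_simp
  show expct P (fun ω => ℓ (aB (blk ω)) ω) ≤ _
  rw [step1]
  refine Finset.sum_le_sum ?_
  intro B hB
  rw [step2 B hB]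
  have h1 : expct (condB P B) (ℓ (aB B)) ≤ H B := by
    rw [← (hcal B hB).1]
    exact le_csSup (hbddc B) ⟨P, hP, rfl⟩
  have h2 : probOf P B ≤ sSup ((fun P => probOf P B) '' Ps) :=
    le_csSup (hbddp B) ⟨P, hP, rfl⟩
  have hpnn : 0 ≤ probOf P B := (key P hP B hB).le
  calc probOf P B * expct (condB P B) (ℓ (aB B))
      ≤ probOf P B * H B := mul_le_mul_of_nonneg_left h1 hpnn
    _ ≤ sSup ((fun P => probOf P B) '' Ps) * H B :=
        mul_le_mul_of_nonneg_right h2 (hHnn B hB)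
    _ = H B * sSup ((fun P => probOf P B) '' Ps) := mul_comm _ _
end

section
/- (Forecasts differing from the generalized Bayes rule fail calibration for some loss.) Let Ω be a finite set, 𝒜 a finite action set, 𝒫 a nonempty set of probability measures on Ω, and B ⊆ Ω with inf_{P∈𝒫} P(B) > 0. Let 𝒬_B ⊆ Δ be nonempty, and suppose the closed convex hull of 𝒬_B differs from the closed convex hull of 𝒫_{|B} := {P(·|B) : P ∈ 𝒫}. Then there exists a loss function ℓ : 𝒜 × Ω → ℝ such that for every action a ∈ 𝒜, sup_{P∈𝒫} E_{P(·|B)}[ℓ(a,·)] ≠ sup_{Q∈𝒬_B} E_Q[ℓ(a,·)]; hence 𝒬_B fails (ℓ,{B})-calibration under the 𝒫 data model for any MinMax action selection. -/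
lemma expct_le_bound {Ω : Type*} [Fintype Ω] (Q Z : Ω → ℝ) (hQ : IsProb Q) :
    expct Q Z ≤ ∑ ω, |Z ω| := by
  unfold expct
  apply Finset.sum_le_sum
  intro ω _
  have h0 := hQ.1 ω
  have h1 : Q ω ≤ 1 := by
    rw [← hQ.2]
    exact Finset.single_le_sum (fun i _ => hQ.1 i) (Finset.mem_univ ω)
  nlinarith [abs_nonneg (Z ω), le_abs_self (Z ω)]

lemma sep_lemma {Ω : Type*} [Fintype Ω] (S T : Set (Ω → ℝ))
    (hSne : S.Nonempty) (hTne : T.Nonempty)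
    (hS : ∀ P ∈ S, IsProb P) (hT : ∀ Q ∈ T, IsProb Q)
    (hx : ∃ x ∈ closure (convexHull ℝ S), x ∉ closure (convexHull ℝ T)) :
    ∃ Z : Ω → ℝ, sSup ((fun Q => expct Q Z) '' T) < sSup ((fun P => expct P Z) '' S) := by
  classical
  obtain ⟨x, hxS, hxT⟩ := hx
  obtain ⟨f, u, hfa, hfx⟩ :=
    geometric_hahn_banach_closed_point ((convex_convexHull ℝ T).closure)
      isClosed_closure hxT
  set Z : Ω → ℝ := fun ω => f (fun j => if ω = j then 1 else 0) with hZ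
  have key : ∀ Q : Ω → ℝ, expct Q Z = f Q := by
    intro Q
    conv_rhs => rw [pi_eq_sum_univ Q]
    rw [map_sum]
    unfold expct
    apply Finset.sum_congr rfl
    intro ω _
    rw [map_smul, smul_eq_mul]
  -- there is P ∈ S with u < f P
  have hexists : ∃ P ∈ S, u < f P := by
    by_contra h
    push_neg at h
    have hsub : closure (convexHull ℝ S) ⊆ {z | f z ≤ u} := by
      apply closure_minimal
      · apply convexHull_min h
        exact convex_halfSpace_le ⟨f.map_add, f.map_smul⟩ u
      · have : {z : Ω → ℝ | f z ≤ u} = f ⁻¹' Set.Iic u := rfl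
        rw [this]
        exact isClosed_Iic.preimage f.continuous
    exact absurd (hsub hxS) (not_le.mpr hfx)
  obtain ⟨P, hP, hPu⟩ := hexists
  have hbddS : BddAbove ((fun P => expct P Z) '' S) := by
    refine ⟨∑ ω, |Z ω|, ?_⟩
    rintro y ⟨P', hP', rfl⟩
    exact expct_le_bound P' Z (hS P' hP')
  have hTle : sSup ((fun Q => expct Q Z) '' T) ≤ u := by
    apply csSup_le (hTne.image _)
    rintro y ⟨Q, hQ, rfl⟩
    have : Q ∈ closure (convexHull ℝ T) :=
      subset_closure (subset_convexHull ℝ T hQ)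
    show expct Q Z ≤ u
    rw [key Q]
    exact le_of_lt (hfa Q this)
  have hSge : u < sSup ((fun P => expct P Z) '' S) := by
    have h2 : expct P Z ≤ sSup ((fun P => expct P Z) '' S) := le_csSup hbddS ⟨P, hP, rfl⟩
    rw [key P] at h2
    linarith
  exact ⟨Z, lt_of_le_of_lt hTle hSge⟩

/-- Forecasts differing from the generalized Bayes rule fail calibration for some loss:
if the closed convex hull of the blockwise forecast `QB` differs from that of the
conditional model `Ps|B`, then there is a loss `ℓ` for which, whatever action is chosen,
the calibration equality on the block `B` fails. -/
theorem different_forecasts_fail_calibration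
    {Ω 𝒜 : Type*} [Fintype Ω] [Fintype 𝒜] [Nonempty 𝒜]
    (Ps : Set (Ω → ℝ)) (hPsne : Ps.Nonempty) (hPs : ∀ P ∈ Ps, IsProb P)
    (B : Set Ω) (hB : 0 < sInf ((fun P => probOf P B) '' Ps))
    (QB : Set (Ω → ℝ)) (hQBne : QB.Nonempty) (hQB : ∀ Q ∈ QB, IsProb Q)
    (hdiff : closure (convexHull ℝ QB)
      ≠ closure (convexHull ℝ ((fun P => condB P B) '' Ps))) :
    ∃ ℓ : 𝒜 → Ω → ℝ, ∀ a : 𝒜,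
      sSup ((fun P => expct (condB P B) (ℓ a)) '' Ps)
        ≠ sSup ((fun Q => expct Q (ℓ a)) '' QB) := by
  classical
  -- every conditional measure is a probability measure
  have hbdd : BddBelow ((fun P => probOf P B) '' Ps) := by
    refine ⟨0, ?_⟩
    rintro y ⟨P, hP, rfl⟩
    exact Finset.sum_nonneg fun ω _ => Set.indicator_nonneg (fun a _ => (hPs P hP).1 a) ω
  have hpos : ∀ P ∈ Ps, 0 < probOf P B := fun P hP =>
    lt_of_lt_of_le hB (csInf_le hbdd ⟨P, hP, rfl⟩)
  have hcond : ∀ P ∈ (fun P => condB P B) '' Ps, IsProb P := by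
    rintro _ ⟨P, hP, rfl⟩
    constructor
    · intro ω
      exact div_nonneg (Set.indicator_nonneg (fun a _ => (hPs P hP).1 a) ω)
        (le_of_lt (hpos P hP))
    · unfold condB
      rw [← Finset.sum_div]
      exact div_self (ne_of_gt (hpos P hP))
  set S := (fun P => condB P B) '' Ps with hSdef
  have hSne : S.Nonempty := hPsne.image _
  have himg : ∀ Z : Ω → ℝ,
      (fun P => expct (condB P B) Z) '' Ps = (fun Q => expct Q Z) '' S := by
    intro Z
    rw [hSdef, Set.image_image]
  by_cases hsub : closure (convexHull ℝ QB) ⊆ closure (convexHull ℝ S)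
  · have : ¬ closure (convexHull ℝ S) ⊆ closure (convexHull ℝ QB) := by
      intro h
      exact hdiff (le_antisymm hsub h)
    obtain ⟨x, hx1, hx2⟩ := Set.not_subset.mp this
    obtain ⟨Z, hZ⟩ := sep_lemma S QB hSne hQBne hcond hQB ⟨x, hx1, hx2⟩
    refine ⟨fun _ => Z, fun a => ?_⟩
    rw [himg Z]
    exact ne_of_gt hZ
  · obtain ⟨x, hx1, hx2⟩ := Set.not_subset.mp hsub
    obtain ⟨Z, hZ⟩ := sep_lemma QB S hQBne hSne hQB hcond ⟨x, hx1, hx2⟩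
    refine ⟨fun _ => Z, fun a => ?_⟩
    rw [himg Z]
    exact ne_of_lt hZ
end

section
/- (Forecasts strictly more optimistic than the generalized Bayes rule fail sub-calibration for some loss.) Let Ω be a finite set, 𝒜 a finite action set, 𝒫 a nonempty set of probability measures on Ω, and B ⊆ Ω with inf_{P∈𝒫} P(B) > 0. Let 𝒬_B ⊆ Δ be nonempty, and suppose the closed convex hull of 𝒬_B is a proper subset of the closed convex hull of 𝒫_{|B} := {P(·|B) : P ∈ 𝒫}. Then there exists a loss function ℓ : 𝒜 × Ω → ℝ such that for every action a ∈ 𝒜, sup_{P∈𝒫} E_{P(·|B)}[ℓ(a,·)] > sup_{Q∈𝒬_B} E_Q[ℓ(a,·)]; hence 𝒬_B fails (ℓ,{B})-sub-calibration under the 𝒫 data model for any MinMax action selection. -/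
/-- Forecasts strictly more optimistic than the generalized Bayes rule fail
sub-calibration for some loss: if the closed convex hull of the blockwise forecast `QB`
is a proper subset of that of the conditional model `Ps|B`, then there is a loss `ℓ`
for which, whatever action is chosen, the sub-calibration inequality on the block `B`
fails strictly. -/
theorem optimistic_forecasts_fail_subcalibration
    {Ω 𝒜 : Type*} [Fintype Ω] [Fintype 𝒜] [Nonempty 𝒜]
    (Ps : Set (Ω → ℝ)) (hPsne : Ps.Nonempty) (hPs : ∀ P ∈ Ps, IsProb P)
    (B : Set Ω) (hB : 0 < sInf ((fun P => probOf P B) '' Ps))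
    (QB : Set (Ω → ℝ)) (hQBne : QB.Nonempty) (hQB : ∀ Q ∈ QB, IsProb Q)
    (hssub : closure (convexHull ℝ QB)
      ⊂ closure (convexHull ℝ ((fun P => condB P B) '' Ps))) :
    ∃ ℓ : 𝒜 → Ω → ℝ, ∀ a : 𝒜,
      sSup ((fun Q => expct Q (ℓ a)) '' QB)
        < sSup ((fun P => expct (condB P B) (ℓ a)) '' Ps) := by
  classical
  -- each P ∈ Ps has positive probability of B
  have hPB : ∀ P ∈ Ps, 0 < probOf P B := by
    intro P hP
    have hbdd : BddBelow ((fun P => probOf P B) '' Ps) := by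
      refine ⟨0, ?_⟩
      rintro _ ⟨P', hP', rfl⟩
      exact Finset.sum_nonneg fun ω _ => Set.indicator_nonneg (fun x _ => (hPs P' hP').1 x) ω
    exact lt_of_lt_of_le hB (csInf_le hbdd ⟨P, hP, rfl⟩)
  -- condB P B is a probability measure
  have hcond : ∀ P ∈ Ps, IsProb (condB P B) := by
    intro P hP
    constructor
    · intro ω
      exact div_nonneg (Set.indicator_nonneg (fun x _ => (hPs P hP).1 x) ω) (hPB P hP).le
    · simp only [condB]
      rw [← Finset.sum_div]
      exact div_self (hPB P hP).ne'
  -- get a separating point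
  obtain ⟨x, hxPs, hxQB⟩ := Set.exists_of_ssubset hssub
  have hconv : Convex ℝ (closure (convexHull ℝ QB)) := (convex_convexHull ℝ QB).closure
  obtain ⟨f, u, hfu, hux⟩ :=
    geometric_hahn_banach_closed_point hconv isClosed_closure hxQB
  set Z : Ω → ℝ := fun ω => f (Pi.single ω 1) with hZ
  -- expct Q Z = f Q
  have hfe : ∀ Q : Ω → ℝ, expct Q Z = f Q := by
    intro Q
    have hQrep : Q = ∑ ω : Ω, Q ω • (Pi.single ω (1:ℝ) : Ω → ℝ) := by
      ext j
      simp [Pi.single_apply, Finset.sum_apply, Finset.sum_ite_eq']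
    conv_rhs => rw [hQrep]
    rw [map_sum]
    simp [expct, hZ, map_smul, smul_eq_mul]
  -- expectation of prob measure bounded by sum of |Z|
  have hbound : ∀ Q : Ω → ℝ, IsProb Q → expct Q Z ≤ ∑ ω, |Z ω| := by
    intro Q hQ
    refine Finset.sum_le_sum fun ω _ => ?_
    calc Q ω * Z ω ≤ Q ω * |Z ω| := mul_le_mul_of_nonneg_left (le_abs_self _) (hQ.1 ω)
    _ ≤ 1 * |Z ω| := by
        refine mul_le_mul_of_nonneg_right ?_ (abs_nonneg _)
        calc Q ω ≤ ∑ ω', Q ω' := Finset.single_le_sum (fun ω' _ => hQ.1 ω') (Finset.mem_univ ω)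
        _ = 1 := hQ.2
    _ = |Z ω| := one_mul _
  refine ⟨fun _ => Z, fun a => ?_⟩
  -- left sup ≤ u
  have hQne' : ((fun Q => expct Q Z) '' QB).Nonempty := hQBne.image _
  have hleft : sSup ((fun Q => expct Q Z) '' QB) ≤ u := by
    refine csSup_le hQne' ?_
    rintro _ ⟨Q, hQ, rfl⟩
    show expct Q Z ≤ u
    rw [hfe]
    exact (hfu Q (subset_closure (subset_convexHull ℝ QB hQ))).le
  -- right sup ≥ f x
  set S : Set (Ω → ℝ) := (fun P => condB P B) '' Ps with hS
  have hSne : ((fun P => expct (condB P B) Z) '' Ps).Nonempty := hPsne.image _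
  have hSbdd : BddAbove ((fun P => expct (condB P B) Z) '' Ps) := by
    refine ⟨∑ ω, |Z ω|, ?_⟩
    rintro _ ⟨P, hP, rfl⟩
    exact hbound _ (hcond P hP)
  set M : ℝ := sSup ((fun P => expct (condB P B) Z) '' Ps) with hM
  have hfxM : f x ≤ M := by
    have hCconv : Convex ℝ {y : Ω → ℝ | f y ≤ M} :=
      convex_halfSpace_le ⟨map_add f, map_smul f⟩ M
    have hCclosed : IsClosed {y : Ω → ℝ | f y ≤ M} :=
      isClosed_le f.continuous continuous_const
    have hSC : S ⊆ {y : Ω → ℝ | f y ≤ M} := by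
      rintro _ ⟨P, hP, rfl⟩
      rw [Set.mem_setOf_eq, ← hfe]
      exact le_csSup hSbdd ⟨P, hP, rfl⟩
    have := closure_minimal (convexHull_min hSC hCconv) hCclosed hxPs
    exact this
  calc sSup ((fun Q => expct Q Z) '' QB) ≤ u := hleft
  _ < f x := hux
  _ ≤ M := hfxM
end
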